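/- Let ξ_k = ±1 satisfy ‖∑_{k=0}^{2n−1} ξ_k e^{ikt}‖_∞ ≤ 5√(2n), let ψ: ℕ → (0,∞), β ∈ ℝ, and define f₂(t) = (10√(2n)+2)^{−1} ∑_{k=−(2n−1)}^{2n−1} ξ_{|k|} ψ(|k|) e^{ikt} (with ψ(0):=ψ(1)). Then the (ψ,β)-derivative of f₂ satisfies ‖(f₂)^ψ_β‖_∞ ≤ 1, i.e., f₂ ∈ L^ψ_{β,∞}. -/

import Mathlib

/-! With `c = (10√(2n)+2)⁻¹`, `f₂` is the real trigonometric polynomial with the Hermitian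
coefficients `c ξ_{|k|} ψ(|k|)`, `|k| < 2n`, so orthogonality of the exponentials on `[-π, π]`
gives its Fourier coefficients, and its `(ψ,β)`-derivative is the real trigonometric polynomial
with coefficients `c ξ_{|k|} e^{iβπ/2 · sign k}`, `0 < |k| < 2n`. Pairing `k` with `-k`, the
derivative is `2c · Re (e^{iβπ/2} ∑_{k=1}^{2n-1} ξ_k e^{ikt})`; dropping the `k = 0` term from
the Rudin–Shapiro sum costs at most `1`, so the derivative is bounded by `2c (5√(2n) + 1) = 1`.
-/

open MeasureTheory Real Complex Finset

/-- The `k`-th Fourier coefficient of a `2π`-periodic function. -/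
noncomputable def fourierCoef (f : ℝ → ℂ) (k : ℤ) : ℂ :=
  (1 / (2 * π)) * ∫ t in (-π)..π, f t * Complex.exp (-Complex.I * k * t)

/-- Membership in the class `L^ψ_{β,∞}`. -/
def LpsiClass (ψ : ℕ → ℝ) (β : ℝ) (f : ℝ → ℝ) : Prop :=
  (∀ t, f (t + 2 * π) = f t) ∧ IntervalIntegrable f volume (-π) π ∧
  ∃ g : ℝ → ℝ, (∀ t, g (t + 2 * π) = g t) ∧ IntervalIntegrable g volume (-π) π ∧
    (∀ᵐ t : ℝ, |g t| ≤ 1) ∧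
    fourierCoef (fun t => (g t : ℂ)) 0 = 0 ∧
    ∀ k : ℤ, k ≠ 0 →
      fourierCoef (fun t => (g t : ℂ)) k
        = (fourierCoef (fun t => (f t : ℂ)) k / (ψ k.natAbs : ℂ)) *
            Complex.exp (Complex.I * (β * π / 2) * (k.sign : ℤ))

open ComplexConjugate

lemma exp_I_mul_int_mul_add_two_pi (k : ℤ) (t : ℝ) :
    Complex.exp (I * k * ↑(t + 2 * π)) = Complex.exp (I * k * t) := by
  rw [show I * k * ↑(t + 2 * π) = I * k * t + k * (2 * π * I) by push_cast; ring,
    Complex.exp_add, Complex.exp_int_mul_two_pi_mul_I, mul_one]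

lemma integral_exp_I_mul_int_mul (j : ℤ) :
    ∫ t in (-π)..π, Complex.exp (I * j * t) = if j = 0 then ((2 * π : ℝ) : ℂ) else 0 := by
  split_ifs with hj
  · simp [hj, two_mul]
  · have hj' : I * j ≠ 0 := by simp [hj]
    rw [integral_exp_mul_complex hj', ← exp_I_mul_int_mul_add_two_pi j (-π),
      show -π + 2 * π = π by ring, sub_self, zero_div]

noncomputable def trigPoly (s : Finset ℤ) (a : ℤ → ℂ) (t : ℝ) : ℂ :=
  ∑ k ∈ s, a k * Complex.exp (I * k * t)

section trigPoly

variable (s : Finset ℤ) (a : ℤ → ℂ)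

lemma trigPoly_add_two_pi (t : ℝ) : trigPoly s a (t + 2 * π) = trigPoly s a t := by
  simp only [trigPoly, exp_I_mul_int_mul_add_two_pi]

@[fun_prop]
lemma continuous_trigPoly : Continuous (trigPoly s a) := by
  unfold trigPoly
  fun_prop

lemma fourierCoef_trigPoly (k : ℤ) :
    fourierCoef (trigPoly s a) k = if k ∈ s then a k else 0 := by
  have hmul (t : ℝ) : trigPoly s a t * Complex.exp (-I * k * t)
      = ∑ m ∈ s, a m * Complex.exp (I * (m - k : ℤ) * t) := by
    simp only [trigPoly, sum_mul, mul_assoc, ← Complex.exp_add]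
    congr! 3
    push_cast
    ring
  have hπ : (π : ℂ) ≠ 0 := ofReal_ne_zero.mpr pi_ne_zero
  simp only [fourierCoef, hmul]
  rw [intervalIntegral.integral_finsetSum fun m _ =>
    (by fun_prop : Continuous _).intervalIntegrable _ _]
  simp only [intervalIntegral.integral_const_mul, integral_exp_I_mul_int_mul, sub_eq_zero,
    mul_ite, mul_zero, sum_ite_eq']
  split_ifs <;> push_cast <;> field_simp

variable {s a}

lemma conj_trigPoly (hs : ∀ k ∈ s, -k ∈ s) (ha : ∀ k, conj (a k) = a (-k)) (t : ℝ) :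
    conj (trigPoly s a t) = trigPoly s a t := by
  rw [trigPoly, map_sum]
  refine sum_nbij' (fun k => -k) (fun k => -k) hs hs (fun k _ => neg_neg k)
    (fun k _ => neg_neg k) fun k _ => ?_
  rw [map_mul, ha, ← Complex.exp_conj]
  simp [Complex.conj_ofReal]

lemma fourierCoef_re_trigPoly (hs : ∀ k ∈ s, -k ∈ s) (ha : ∀ k, conj (a k) = a (-k)) (k : ℤ) :
    fourierCoef (fun t => ((trigPoly s a t).re : ℂ)) k = if k ∈ s then a k else 0 := by
  have hre : (fun t => ((trigPoly s a t).re : ℂ)) = trigPoly s a :=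
    funext fun t => Complex.conj_eq_iff_re.mp (conj_trigPoly hs ha t)
  rw [hre]
  exact fourierCoef_trigPoly s a k

end trigPoly

noncomputable def psiBetaDerivCoef (ψ : ℕ → ℝ) (β : ℝ) (a : ℤ → ℂ) (k : ℤ) : ℂ :=
  a k / ψ k.natAbs * Complex.exp (I * (β * π / 2) * (k.sign : ℤ))

lemma conj_psiBetaDerivCoef (ψ : ℕ → ℝ) (β : ℝ) {a : ℤ → ℂ} (ha : ∀ k, conj (a k) = a (-k))
    (k : ℤ) : conj (psiBetaDerivCoef ψ β a k) = psiBetaDerivCoef ψ β a (-k) := by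
  simp only [psiBetaDerivCoef, map_mul, map_div₀, ha, Complex.conj_ofReal, Int.natAbs_neg,
    ← Complex.exp_conj, Complex.conj_I, map_intCast, map_ofNat, Int.sign_neg]
  push_cast
  ring_nf

lemma psiBetaDerivCoef_of_pos (ψ : ℕ → ℝ) (β : ℝ) (a : ℤ → ℂ) {k : ℤ} (hk : 0 < k) :
    psiBetaDerivCoef ψ β a k = a k / ψ k.natAbs * Complex.exp (I * (β * π / 2)) := by
  simp [psiBetaDerivCoef, Int.sign_eq_one_of_pos hk]

theorem lpsiClass_re_trigPoly {ψ : ℕ → ℝ} {β : ℝ} {s : Finset ℤ} {a : ℤ → ℂ}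
    (hs : ∀ k ∈ s, -k ∈ s) (ha : ∀ k, conj (a k) = a (-k))
    (hbound : ∀ t, |(trigPoly (s.erase 0) (psiBetaDerivCoef ψ β a) t).re| ≤ 1) :
    LpsiClass ψ β (fun t => (trigPoly s a t).re) := by
  have hs' : ∀ k ∈ s.erase 0, -k ∈ s.erase 0 := fun k hk =>
    mem_erase.2 ⟨neg_ne_zero.2 (ne_of_mem_erase hk), hs k (mem_of_mem_erase hk)⟩
  refine ⟨fun t => by simp only [trigPoly_add_two_pi],
    (by fun_prop : Continuous _).intervalIntegrable _ _,
    fun t => (trigPoly (s.erase 0) (psiBetaDerivCoef ψ β a) t).re,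
    fun t => by simp only [trigPoly_add_two_pi],
    (by fun_prop : Continuous _).intervalIntegrable _ _,
    .of_forall hbound, ?_, fun k hk => ?_⟩
  · rw [fourierCoef_re_trigPoly hs' (conj_psiBetaDerivCoef ψ β ha)]
    simp
  · rw [fourierCoef_re_trigPoly hs' (conj_psiBetaDerivCoef ψ β ha),
      fourierCoef_re_trigPoly hs ha]
    by_cases hks : k ∈ s
    · simp [hk, hks, psiBetaDerivCoef]
    · simp [hks]

lemma sum_Icc_neg_erase_zero_of_even {M : Type*} [AddCommMonoid M] {f : ℤ → M}
    (hf : ∀ k, f (-k) = f k) (N : ℤ) :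
    ∑ k ∈ (Icc (-N) N).erase 0, f k = 2 • ∑ k ∈ Icc 1 N, f k := by
  have hsplit : (Icc (-N) N).erase 0 = Icc (-N) (-1) ∪ Icc 1 N := by
    ext k
    simp only [mem_erase, mem_Icc, mem_union]
    omega
  rw [hsplit, sum_union (disjoint_left.2 fun k h₁ h₂ => by simp only [mem_Icc] at h₁ h₂; omega),
    two_smul]
  congr 1
  refine sum_nbij' (fun k => -k) (fun k => -k) (fun k hk => ?_) (fun k hk => ?_)
    (fun k _ => neg_neg k) (fun k _ => neg_neg k) fun k _ => (hf k).symm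
  all_goals simp only [mem_Icc] at hk ⊢; omega

lemma re_trigPoly_Icc_erase_zero {a : ℤ → ℂ} (ha : ∀ k, conj (a k) = a (-k)) (N : ℤ) (t : ℝ) :
    (trigPoly ((Icc (-N) N).erase 0) a t).re = 2 * (trigPoly (Icc 1 N) a t).re := by
  simp only [trigPoly, re_sum]
  rw [sum_Icc_neg_erase_zero_of_even (fun k => ?_), nsmul_eq_mul, Nat.cast_ofNat]
  rw [← ha, ← Complex.conj_re (a k * _), map_mul, ← Complex.exp_conj]
  simp [Complex.conj_ofReal]

lemma abs_re_trigPoly_Icc_erase_zero_le {a : ℤ → ℂ} (ha : ∀ k, conj (a k) = a (-k)) (N : ℤ)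
    (t : ℝ) : |(trigPoly ((Icc (-N) N).erase 0) a t).re| ≤ 2 * ‖trigPoly (Icc 1 N) a t‖ := by
  rw [re_trigPoly_Icc_erase_zero ha, abs_mul, abs_two]
  gcongr
  exact abs_re_le_norm _

lemma sum_Icc_one_eq_sum_range_sub {M : Type*} [AddCommGroup M] (F : ℤ → M) {N : ℕ}
    (hN : 0 < N) : ∑ k ∈ Icc (1 : ℤ) (N - 1), F k = ∑ k ∈ range N, F k - F 0 := by
  rw [sum_range_eq_add_Ico _ hN, Nat.cast_zero, add_sub_cancel_left]
  refine sum_nbij' Int.toNat (fun k => k) (fun k hk => ?_) (fun k hk => ?_)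
    (fun k hk => ?_) (fun k _ => Int.toNat_natCast k)
    fun k hk => by rw [Int.toNat_of_nonneg (by linarith [(mem_Icc.1 hk).1])]
  all_goals simp only [mem_Icc, mem_Ico] at hk ⊢
  all_goals omega

lemma norm_sum_Icc_one_le {ξ : ℕ → ℝ} (hξ0 : |ξ 0| ≤ 1) {N : ℕ} (hN : 0 < N) {t B : ℝ}
    (h : ‖∑ k ∈ range N, (ξ k : ℂ) * Complex.exp (I * k * t)‖ ≤ B) :
    ‖∑ k ∈ Icc (1 : ℤ) (N - 1), (ξ k.natAbs : ℂ) * Complex.exp (I * k * t)‖ ≤ B + 1 := by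
  rw [sum_Icc_one_eq_sum_range_sub (fun k : ℤ => (ξ k.natAbs : ℂ) * Complex.exp (I * k * t)) hN]
  simp only [Int.natAbs_natCast, Int.cast_natCast, Int.cast_zero, Int.natAbs_zero, mul_zero,
    zero_mul, Complex.exp_zero, mul_one]
  refine (norm_sub_le _ _).trans (add_le_add h ?_)
  rwa [Complex.norm_real, Real.norm_eq_abs]

theorem f2_in_class_general (n : ℕ) (hn : 1 ≤ n) (ξ : ℕ → ℝ)
    (hξ : ∀ k, ξ k = 1 ∨ ξ k = -1)
    (hRS : ∀ t : ℝ,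
      ‖∑ k ∈ Finset.range (2 * n), (ξ k : ℂ) * Complex.exp (Complex.I * k * t)‖
        ≤ 5 * Real.sqrt (2 * n))
    (ψ : ℕ → ℝ) (hψ : ∀ k, 0 < ψ k) (β : ℝ) :
    LpsiClass ψ β (fun t : ℝ =>
      ((1 / (10 * Real.sqrt (2 * n) + 2) : ℝ) *
        ∑ k ∈ Finset.Icc (-(2 * (n : ℤ) - 1)) (2 * (n : ℤ) - 1),
          (ξ k.natAbs : ℂ) * (ψ k.natAbs : ℂ) * Complex.exp (Complex.I * k * t)).re) := by
  set c : ℝ := 1 / (10 * √(2 * n) + 2) with hc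
  set N : ℤ := 2 * n - 1
  set a : ℤ → ℂ := fun k => c * (ξ k.natAbs * ψ k.natAbs)
  have ha : ∀ k, conj (a k) = a (-k) := fun k => by simp [a, Complex.conj_ofReal]
  have hf : (fun t : ℝ => ((c : ℂ) * ∑ k ∈ Icc (-N) N,
      (ξ k.natAbs : ℂ) * ψ k.natAbs * Complex.exp (I * k * t)).re)
      = fun t => (trigPoly (Icc (-N) N) a t).re := by
    funext t
    simp only [trigPoly, a, mul_sum, mul_assoc]
  rw [hf]
  refine lpsiClass_re_trigPoly (fun k hk => by simp only [mem_Icc] at hk ⊢; omega) ha fun t => ?_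
  have hderiv : trigPoly (Icc 1 N) (psiBetaDerivCoef ψ β a) t = (c * Complex.exp (I * (β * π / 2)))
      * ∑ k ∈ Icc 1 N, (ξ k.natAbs : ℂ) * Complex.exp (I * k * t) := by
    rw [trigPoly, mul_sum]
    refine sum_congr rfl fun k hk => ?_
    have hψk : (ψ k.natAbs : ℂ) ≠ 0 := ofReal_ne_zero.2 (hψ _).ne'
    rw [psiBetaDerivCoef_of_pos ψ β a (mem_Icc.1 hk).1]
    field_simp
    ring
  have hRS' := norm_sum_Icc_one_le (by rcases hξ 0 with h | h <;> simp [h]) (N := 2 * n)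
    (by omega) (hRS t)
  push_cast at hRS'
  calc |(trigPoly ((Icc (-N) N).erase 0) (psiBetaDerivCoef ψ β a) t).re|
      ≤ 2 * ‖trigPoly (Icc 1 N) (psiBetaDerivCoef ψ β a) t‖ :=
        abs_re_trigPoly_Icc_erase_zero_le (conj_psiBetaDerivCoef ψ β ha) N t
    _ = 2 * c * ‖∑ k ∈ Icc 1 N, (ξ k.natAbs : ℂ) * Complex.exp (I * k * t)‖ := by
        simp [hderiv, Complex.norm_exp, abs_of_pos (by positivity : 0 < c), mul_assoc]
    _ ≤ 2 * c * (5 * √(2 * n) + 1) := by gcongr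
    _ = 1 := by
        rw [hc]
        field_simp
        ring

/-- The Rudin–Shapiro test function
`f₂(t) = (10√(2n)+2)⁻¹ ∑_{|k| ≤ 2n-1} ξ_{|k|} ψ(|k|) e^{ikt}` belongs to `L^ψ_{β,∞}`. -/
theorem f2_in_class (n : ℕ) (hn : 1 ≤ n) (ξ : ℕ → ℝ)
    (hξ : ∀ k, ξ k = 1 ∨ ξ k = -1)
    (hRS : ∀ t : ℝ,
      ‖∑ k ∈ Finset.range (2 * n), (ξ k : ℂ) * Complex.exp (Complex.I * k * t)‖
        ≤ 5 * Real.sqrt (2 * n))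
    (ψ : ℕ → ℝ) (hψ : ∀ k, 0 < ψ k) (hψ0 : ψ 0 = ψ 1) (β : ℝ) :
    LpsiClass ψ β (fun t : ℝ =>
      ((1 / (10 * Real.sqrt (2 * n) + 2) : ℝ) *
        ∑ k ∈ Finset.Icc (-(2 * (n : ℤ) - 1)) (2 * (n : ℤ) - 1),
          (ξ k.natAbs : ℂ) * (ψ k.natAbs : ℂ) * Complex.exp (Complex.I * k * t)).re) :=
  f2_in_class_general n hn ξ hξ hRS ψ hψ β
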